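/- arXiv:1902.04360 — 4 statements merged into one kernel-verified Lean document; each statement's English description precedes it below -/
import Mathlib

section
/- For nonnegative integers n, k, the sum Σ_{m=0}^n ((1/k!)·δ^k x^m)·λ^{n-m}·S₁(n,m) equals T_{2,λ}(n,k|x) if n ≥ k and equals 0 if n < k, where δ is the central difference operator and S₁(n,m) are Stirling numbers of the first kind. -/
/-!
Both sides are `(1/k!) δᵏ (·)_{n,λ}` evaluated at `x`, where `(y)_{n,λ} = λⁿ (y/λ)ₙ` is the
degenerate falling factorial. On the Stirling side this is the expansion
`(y)_{n,λ} = ∑ S₁(n,m) λ^{n-m} yᵐ` together with linearity of `δᵏ`. On the `T₂` side, near `t = 0`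
the generating function equals `(1/k!) ∑ₗ (-1)^{k-l} C(k,l) (1+λt)^{(x+l-k/2)/λ}`, and the `n`-th
derivative of `(1+λt)^r` at `0` is `λⁿ (r)ₙ`, so `T₂` is the same combination of shifts of
`(·)_{n,λ}`. When `k > n` the value vanishes: `δᵏ` is a shifted `k`-th forward difference, which
kills polynomials of degree `n < k`.
-/

noncomputable def T2 (lam x : ℝ) (n k : ℕ) : ℝ :=
  iteratedDeriv n (fun t : ℝ =>
    (k.factorial : ℝ)⁻¹ * (1 + lam * t) ^ (x / lam) *
      ((1 + lam * t) ^ (1 / (2 * lam)) - (1 + lam * t) ^ (-(1 / (2 * lam)))) ^ k) 0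

noncomputable def cdiff (f : ℝ → ℝ) : ℝ → ℝ := fun x => f (x + 1 / 2) - f (x - 1 / 2)

noncomputable def S1 (n k : ℕ) : ℤ :=
  (∏ i ∈ Finset.range n, (Polynomial.X - Polynomial.C (i : ℤ))).coeff k

open Finset Polynomial Topology

theorem cdiff_iterate_eq_fwdDiff_iterate (f : ℝ → ℝ) (k : ℕ) (x : ℝ) :
    cdiff^[k] f x = (fwdDiff 1)^[k] f (x - k / 2) := by
  induction k generalizing x with
  | zero => simp
  | succ k ih =>
    have hshift : x - (k + 1 : ℕ) / 2 = x - 1 / 2 - k / 2 := by push_cast; ring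
    rw [Function.iterate_succ_apply', Function.iterate_succ_apply', cdiff, ih, ih, fwdDiff, hshift]
    congr 1
    exact congrArg _ (by ring)

theorem cdiff_iterate_eq_sum (f : ℝ → ℝ) (k : ℕ) (x : ℝ) :
    cdiff^[k] f x = ∑ l ∈ range (k + 1), (-1) ^ (k - l) * k.choose l * f (x + l - k / 2) := by
  rw [cdiff_iterate_eq_fwdDiff_iterate, fwdDiff_iter_eq_sum_shift]
  refine sum_congr rfl fun l _ => ?_
  rw [zsmul_eq_mul, nsmul_one, sub_add_eq_add_sub]
  push_cast
  ring

theorem cdiff_iterate_fun_sum {ι : Type*} (s : Finset ι) (c : ι → ℝ) (f : ι → ℝ → ℝ)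
    (k : ℕ) (x : ℝ) :
    cdiff^[k] (fun y => ∑ i ∈ s, c i * f i y) x = ∑ i ∈ s, c i * cdiff^[k] (f i) x := by
  simp only [cdiff_iterate_eq_sum, mul_sum]
  rw [sum_comm]
  exact sum_congr rfl fun _ _ => sum_congr rfl fun _ _ => by ring

theorem cdiff_iterate_eval_eq_zero {p : ℝ[X]} {k : ℕ} (hp : p.natDegree < k) (x : ℝ) :
    cdiff^[k] p.eval x = 0 := by
  rw [cdiff_iterate_eq_fwdDiff_iterate, fwdDiff_iter_eq_zero_of_degree_lt hp, Pi.zero_apply]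

theorem S1_eq_coeff_descPochhammer (n m : ℕ) : S1 n m = (descPochhammer ℤ n).coeff m := by
  rw [S1]
  congr 1
  induction n with
  | zero => simp
  | succ n ih => rw [prod_range_succ, ih, descPochhammer_succ_right, ← map_natCast C]

section degFallingFactorial

variable {K : Type*} [Field K]

/-- The degenerate falling factorial `(y)_{n,λ} = y (y - λ) ⋯ (y - (n - 1) λ)`, as `λⁿ (y / λ)ₙ`. -/
noncomputable def degFallingFactorial (lam : K) (n : ℕ) : K[X] :=
  C (lam ^ n) * (descPochhammer K n).comp (C lam⁻¹ * X)

theorem eval_degFallingFactorial (lam y : K) (n : ℕ) :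
    (degFallingFactorial lam n).eval y = lam ^ n * (descPochhammer K n).eval (lam⁻¹ * y) := by
  simp [degFallingFactorial, eval_comp]

theorem natDegree_degFallingFactorial_le (lam : K) (n : ℕ) :
    (degFallingFactorial lam n).natDegree ≤ n := by
  unfold degFallingFactorial
  calc _ ≤ ((descPochhammer K n).comp (C lam⁻¹ * X)).natDegree := natDegree_C_mul_le _ _
    _ ≤ (descPochhammer K n).natDegree * (C lam⁻¹ * X).natDegree := natDegree_comp_le
    _ ≤ n * 1 := by
      gcongr
      exacts [(descPochhammer_natDegree K n).le, (natDegree_C_mul_le _ _).trans natDegree_X_le]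
    _ = n := mul_one n

theorem eval_degFallingFactorial_eq_sum_S1 {lam : K} (hlam : lam ≠ 0) (n : ℕ) (y : K) :
    (degFallingFactorial lam n).eval y
      = ∑ m ∈ range (n + 1), (S1 n m : K) * lam ^ (n - m) * y ^ m := by
  have hdeg : (descPochhammer K n).natDegree < n + 1 := by
    rw [descPochhammer_natDegree]; exact n.lt_succ_self
  rw [eval_degFallingFactorial, eval_eq_sum_range' hdeg, mul_sum]
  refine sum_congr rfl fun m hm => ?_
  rw [S1_eq_coeff_descPochhammer, ← descPochhammer_map (Int.castRingHom K), coeff_map,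
    pow_sub₀ lam hlam (Nat.lt_succ_iff.mp (mem_range.mp hm)), mul_pow, inv_pow]
  simp only [eq_intCast]
  ring

end degFallingFactorial

theorem iteratedDeriv_comp_mul_left {𝕜 E : Type*} [NontriviallyNormedField 𝕜]
    [NormedAddCommGroup E] [NormedSpace 𝕜 E] (c : 𝕜) (f : 𝕜 → E) (n : ℕ) :
    iteratedDeriv n (fun x => f (c * x)) = fun x => c ^ n • iteratedDeriv n f (c * x) := by
  induction n with
  | zero => simp
  | succ n ih =>
    funext x
    rw [iteratedDeriv_succ, ih, deriv_fun_const_smul_field, deriv_comp_mul_left, iteratedDeriv_succ,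
      smul_smul, pow_succ]

theorem iteratedDeriv_one_add_mul_rpow_zero (lam r : ℝ) (n : ℕ) :
    iteratedDeriv n (fun t => (1 + lam * t) ^ r) 0 = lam ^ n * (descPochhammer ℝ n).eval r := by
  have hcomp : (fun t : ℝ => (1 + lam * t) ^ r) = fun t => (fun u => (u + 1) ^ r) (lam * t) := by
    simp only [add_comm]
  rw [hcomp, iteratedDeriv_comp_mul_left lam (fun u => (u + 1) ^ r) n,
    iteratedDeriv_comp_add_const n (fun u => u ^ r) 1]
  simp [iteratedDeriv_eq_iterate, Real.iter_deriv_rpow_const]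

theorem rpow_div_mul_sub_rpow_neg_pow {b : ℝ} (hb : 0 < b) (lam x : ℝ) (k : ℕ) :
    b ^ (x / lam) * (b ^ (1 / (2 * lam)) - b ^ (-(1 / (2 * lam)))) ^ k
      = ∑ l ∈ range (k + 1), (-1) ^ (k - l) * k.choose l * b ^ ((x + l - k / 2) / lam) := by
  rw [sub_eq_add_neg, add_pow, mul_sum]
  refine sum_congr rfl fun l hl => ?_
  have hexp : b ^ (x / lam) * ((b ^ (1 / (2 * lam))) ^ l * (b ^ (-(1 / (2 * lam)))) ^ (k - l))
      = b ^ ((x + l - k / 2) / lam) := by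
    rw [← Real.rpow_mul_natCast hb.le, ← Real.rpow_mul_natCast hb.le, ← Real.rpow_add hb,
      ← Real.rpow_add hb, Nat.cast_sub (Nat.lt_succ_iff.mp (mem_range.mp hl))]
    ring_nf
  rw [neg_pow, ← hexp]
  ring

theorem T2_eq_cdiff_iterate (lam x : ℝ) (n k : ℕ) :
    T2 lam x n k = (k.factorial : ℝ)⁻¹ * cdiff^[k] (degFallingFactorial lam n).eval x := by
  have hpos : ∀ᶠ t in 𝓝 (0 : ℝ), 0 < 1 + lam * t :=
    continuousAt_const.eventually_lt (by fun_prop) (by norm_num)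
  have hloc : (fun t : ℝ => (k.factorial : ℝ)⁻¹ * (1 + lam * t) ^ (x / lam) *
        ((1 + lam * t) ^ (1 / (2 * lam)) - (1 + lam * t) ^ (-(1 / (2 * lam)))) ^ k)
      =ᶠ[𝓝 0] fun t => (k.factorial : ℝ)⁻¹ * ∑ l ∈ range (k + 1),
        (-1) ^ (k - l) * k.choose l * (1 + lam * t) ^ ((x + l - k / 2) / lam) := by
    filter_upwards [hpos] with t ht
    rw [mul_assoc, rpow_div_mul_sub_rpow_neg_pow ht]
  have hsmooth : ∀ l ∈ range (k + 1), ContDiffAt ℝ n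
      (fun t : ℝ => (-1) ^ (k - l) * k.choose l * (1 + lam * t) ^ ((x + l - k / 2) / lam)) 0 :=
    fun _ _ => contDiffAt_const.mul <|
      (by fun_prop : ContDiffAt ℝ n (fun t : ℝ => 1 + lam * t) 0).rpow_const_of_ne (by simp)
  rw [T2, hloc.iteratedDeriv_eq, iteratedDeriv_const_mul_field, iteratedDeriv_fun_sum hsmooth,
    cdiff_iterate_eq_sum]
  congr 1
  refine sum_congr rfl fun l _ => ?_
  rw [iteratedDeriv_const_mul_field, iteratedDeriv_one_add_mul_rpow_zero, eval_degFallingFactorial,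
    div_eq_inv_mul]

theorem T2_poly_via_stirling_first (lam x : ℝ) (hlam : lam ≠ 0) (n k : ℕ) :
    ∑ m ∈ Finset.range (n + 1),
        ((k.factorial : ℝ)⁻¹ * cdiff^[k] (fun t => t ^ m) x) * lam ^ (n - m) * (S1 n m : ℝ)
      = if k ≤ n then T2 lam x n k else 0 := by
  have hsum : ∑ m ∈ Finset.range (n + 1),
        ((k.factorial : ℝ)⁻¹ * cdiff^[k] (fun t => t ^ m) x) * lam ^ (n - m) * (S1 n m : ℝ)
      = (k.factorial : ℝ)⁻¹ * cdiff^[k] (degFallingFactorial lam n).eval x := by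
    simp_rw [eval_degFallingFactorial_eq_sum_S1 hlam, cdiff_iterate_fun_sum, mul_sum]
    exact sum_congr rfl fun m _ => by ring
  rw [hsum]
  split_ifs with hkn
  · exact (T2_eq_cdiff_iterate lam x n k).symm
  · rw [cdiff_iterate_eval_eq_zero ((natDegree_degFallingFactorial_le lam n).trans_lt
      (not_le.mp hkn)), mul_zero]
end

section
/- For integers n, k with 1 ≤ k ≤ n, the degenerate central factorial polynomials of the second kind satisfy the recurrence T_{2,λ}(n+1,k|x) = (x + k/2 - nλ)·T_{2,λ}(n,k|x) + T_{2,λ}(n,k-1|x - 1/2). -/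
open Filter Topology

theorem iteratedDeriv_affine_mul_deriv {𝕜 : Type*} [NontriviallyNormedField 𝕜] {f : 𝕜 → 𝕜}
    {x : 𝕜} (a b : 𝕜) {n : ℕ} (hf : ContDiffAt 𝕜 (n + 1) f x) :
    iteratedDeriv n (fun t => (a + b * t) * deriv f t) x
      = (a + b * x) * iteratedDeriv (n + 1) f x + n * b * iteratedDeriv n f x := by
  have hvanish (i : ℕ) : iteratedDeriv (i + 2) (fun t => a + b * t) x = 0 := by
    simp [iteratedDeriv_succ' (n := i + 1), iteratedDeriv_succ' (n := i)]
  rw [iteratedDeriv_fun_mul (by fun_prop) (hf.derivWithin le_rfl), iteratedDeriv_succ']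
  rcases n with _ | n
  · simp
  · rw [Finset.sum_range_succ', Finset.sum_range_succ', Finset.sum_eq_zero fun i _ => by
      rw [hvanish, mul_zero, zero_mul]]
    simp only [zero_add, Nat.choose_one_right, Nat.cast_add, Nat.cast_one, iteratedDeriv_succ',
      deriv_const_add', deriv_const_mul_id', iteratedDeriv_zero, add_tsub_cancel_right,
      Nat.choose_zero_right, one_mul, tsub_zero]
    ring

theorem hasDerivAt_one_add_mul_rpow (lam p : ℝ) {t : ℝ} (ht : 1 + lam * t ≠ 0) :
    HasDerivAt (fun s : ℝ => (1 + lam * s) ^ p)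
      (lam * p * (1 + lam * t) ^ p / (1 + lam * t)) t := by
  have h := ((hasDerivAt_id t).const_mul lam).const_add 1 |>.rpow_const (p := p) (Or.inl ht)
  simp only [id, mul_one] at h
  rwa [Real.rpow_sub_one ht, ← mul_div_assoc] at h

noncomputable def T2GenFun (lam x : ℝ) (k : ℕ) (t : ℝ) : ℝ :=
  (k.factorial : ℝ)⁻¹ * (1 + lam * t) ^ (x / lam) *
    ((1 + lam * t) ^ (1 / (2 * lam)) - (1 + lam * t) ^ (-(1 / (2 * lam)))) ^ k

theorem T2_eq_iteratedDeriv (lam x : ℝ) (n k : ℕ) :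
    T2 lam x n k = iteratedDeriv n (T2GenFun lam x k) 0 := rfl

theorem contDiffAt_T2GenFun {lam x t : ℝ} (k : ℕ) {m : WithTop ℕ∞} (ht : 1 + lam * t ≠ 0) :
    ContDiffAt ℝ m (T2GenFun lam x k) t := by
  have hu : ContDiffAt ℝ m (fun s : ℝ => 1 + lam * s) t := by fun_prop
  exact (contDiffAt_const.mul (hu.rpow_const_of_ne ht)).mul
    (((hu.rpow_const_of_ne ht).sub (hu.rpow_const_of_ne ht)).pow k)

theorem one_add_mul_mul_deriv_T2GenFun {lam : ℝ} (hlam : lam ≠ 0) (x : ℝ) (k : ℕ) {t : ℝ}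
    (ht : 0 < 1 + lam * t) :
    (1 + lam * t) * deriv (T2GenFun lam x (k + 1)) t
      = (x + (k + 1 : ℕ) / 2) * T2GenFun lam x (k + 1) t + T2GenFun lam (x - 1 / 2) k t := by
  have hA := hasDerivAt_one_add_mul_rpow lam (x / lam) ht.ne'
  have hP := hasDerivAt_one_add_mul_rpow lam (1 / (2 * lam)) ht.ne'
  have hQ := hasDerivAt_one_add_mul_rpow lam (-(1 / (2 * lam))) ht.ne'
  have hF := (hA.const_mul ((k + 1).factorial : ℝ)⁻¹).fun_mul ((hP.fun_sub hQ).fun_pow (k + 1))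
  have hshift : (1 + lam * t) ^ ((x - 1 / 2) / lam)
      = (1 + lam * t) ^ (x / lam) * (1 + lam * t) ^ (-(1 / (2 * lam))) := by
    rw [← Real.rpow_add ht]
    congr 1
    field_simp
    ring
  unfold T2GenFun
  rw [hF.deriv, hshift, Nat.factorial_succ]
  generalize (1 + lam * t) ^ (x / lam) = A
  generalize (1 + lam * t) ^ (1 / (2 * lam)) = P
  generalize (1 + lam * t) ^ (-(1 / (2 * lam))) = Q
  have hu := ht.ne'
  generalize 1 + lam * t = u at hu ⊢
  push_cast
  field_simp
  ring

theorem T2_poly_recurrence_general (lam x : ℝ) (hlam : lam ≠ 0) (n k : ℕ) (hk : 1 ≤ k) :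
    T2 lam x (n + 1) k
      = (x + (k : ℝ) / 2 - (n : ℝ) * lam) * T2 lam x n k
        + T2 lam (x - 1 / 2) n (k - 1) := by
  obtain ⟨k, rfl⟩ := Nat.exists_eq_add_of_le' hk
  have hpos : ∀ᶠ t in 𝓝 (0 : ℝ), 0 < 1 + lam * t :=
    (show ContinuousAt (fun t : ℝ => 1 + lam * t) 0 by fun_prop).eventually
      (lt_mem_nhds (by simp))
  have hode : (fun t => (1 + lam * t) * deriv (T2GenFun lam x (k + 1)) t) =ᶠ[𝓝 0]
      fun t => (x + (k + 1 : ℕ) / 2) * T2GenFun lam x (k + 1) t + T2GenFun lam (x - 1 / 2) k t := by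
    filter_upwards [hpos] with t ht using one_add_mul_mul_deriv_T2GenFun hlam x k ht
  have hsmooth (m : ℕ) (c : ℝ) (j : ℕ) : ContDiffAt ℝ m (T2GenFun lam c j) 0 :=
    contDiffAt_T2GenFun j (by simp)
  have key := (hode.iteratedDeriv n).eq_of_nhds
  rw [iteratedDeriv_affine_mul_deriv 1 lam (by exact_mod_cast hsmooth (n + 1) x (k + 1)),
    iteratedDeriv_fun_add (contDiffAt_const.mul (hsmooth n x (k + 1))) (hsmooth n _ k),
    iteratedDeriv_const_mul_field] at key
  simp only [mul_zero, add_zero, one_mul] at key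
  simp only [T2_eq_iteratedDeriv, Nat.add_sub_cancel]
  linear_combination key

theorem T2_poly_recurrence (lam x : ℝ) (hlam : lam ≠ 0) (n k : ℕ) (hk : 1 ≤ k) (hkn : k ≤ n) :
    T2 lam x (n + 1) k
      = (x + (k : ℝ) / 2 - (n : ℝ) * lam) * T2 lam x n k
        + T2 lam (x - 1 / 2) n (k - 1) :=
  T2_poly_recurrence_general lam x hlam n k hk
end

section
/- For nonnegative integers n, k, the expression (n!/k!)·Σ_{l=0}^k C(k,l)·(-1)^{k-l}·C_λ(l - k/2, n) equals T_{2,λ}(n,k) if n ≥ k and 0 if n < k, where C_λ(x,n) = (x)_{n,λ}/n! is the λ-binomial coefficient. -/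
noncomputable def dfall (lam x : ℝ) (n : ℕ) : ℝ := ∏ i ∈ Finset.range n, (x - i * lam)

/-!
By the binomial theorem, near `t = 0` the generating function of `T2 lam 0 · k` is the
combination `(k!)⁻¹ ∑ₗ (k choose l) (-1)^(k-l) (1 + λt)^((l - k/2)/λ)`, and the `n`-th
derivative at `0` of `(1 + λt)^(a/λ)` is `(a)_{n,λ}`. When `n < k` the same alternating sum is
the `k`-th forward difference of the degree-`n` polynomial `x ↦ (x)_{n,λ}`, hence vanishes.
-/

open Filter Finset Polynomial Topology

lemma dfall_succ (lam x : ℝ) (n : ℕ) : dfall lam x (n + 1) = dfall lam x n * (x - n * lam) :=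
  prod_range_succ _ _

lemma eval_prod_X_sub_C_eq_dfall (lam x : ℝ) (n : ℕ) :
    (∏ i ∈ range n, (X - C ((i : ℝ) * lam))).eval x = dfall lam x n := by
  simp only [eval_prod, eval_sub, eval_X, eval_C, dfall]

lemma sum_choose_mul_neg_one_pow_eval_eq_zero {R : Type*} [CommRing R] {P : R[X]} {k : ℕ}
    (hP : P.natDegree < k) (y : R) :
    ∑ l ∈ range (k + 1), (k.choose l : R) * (-1) ^ (k - l) * P.eval (y + l) = 0 := by
  have h := congr_fun (fwdDiff_iter_eq_zero_of_degree_lt hP) y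
  rw [fwdDiff_iter_eq_sum_shift] at h
  simpa [zsmul_eq_mul, mul_comm] using h

lemma sum_choose_mul_neg_one_pow_dfall_eq_zero (lam y : ℝ) {n k : ℕ} (hnk : n < k) :
    ∑ l ∈ range (k + 1), (k.choose l : ℝ) * (-1) ^ (k - l) * dfall lam (y + l) n = 0 := by
  have hdeg : (∏ i ∈ range n, (X - C ((i : ℝ) * lam))).natDegree < k := by
    rwa [natDegree_finsetProd_X_sub_C_eq_card, card_range]
  simpa only [eval_prod_X_sub_C_eq_dfall] using sum_choose_mul_neg_one_pow_eval_eq_zero hdeg y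

lemma iteratedDeriv_one_add_mul_rpow (lam c : ℝ) (n : ℕ) {t : ℝ} (ht : 0 < 1 + lam * t) :
    iteratedDeriv n (fun t => (1 + lam * t) ^ c) t
      = dfall lam (lam * c) n * (1 + lam * t) ^ (c - n) := by
  induction n generalizing t with
  | zero => simp [dfall]
  | succ n ih =>
    have hU : IsOpen {t : ℝ | 0 < 1 + lam * t} := isOpen_lt continuous_const (by fun_prop)
    have heq : iteratedDeriv n (fun t => (1 + lam * t) ^ c)
        =ᶠ[𝓝 t] fun t => dfall lam (lam * c) n * (1 + lam * t) ^ (c - n) :=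
      eventually_of_mem (hU.mem_nhds ht) fun s hs => ih hs
    have hderiv : HasDerivAt (fun t => dfall lam (lam * c) n * (1 + lam * t) ^ (c - n))
        (dfall lam (lam * c) n * (lam * (c - n) * (1 + lam * t) ^ (c - n - 1))) t := by
      have hlin : HasDerivAt (fun t => 1 + lam * t) lam t := by
        simpa using ((hasDerivAt_id t).const_mul lam).const_add 1
      exact (hlin.rpow_const (p := c - n) (Or.inl ht.ne')).const_mul _
    rw [iteratedDeriv_succ, heq.deriv_eq, hderiv.deriv, dfall_succ]
    push_cast
    rw [sub_sub]
    ring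

lemma rpow_sub_rpow_neg_pow {u : ℝ} (hu : 0 < u) (a : ℝ) (k : ℕ) :
    (u ^ a - u ^ (-a)) ^ k
      = ∑ l ∈ range (k + 1), (k.choose l : ℝ) * (-1) ^ (k - l) * u ^ (a * (2 * l - k)) := by
  rw [sub_eq_add_neg, add_pow]
  refine sum_congr rfl fun l hl => ?_
  have hlk : l ≤ k := Nat.lt_succ_iff.mp (mem_range.mp hl)
  rw [neg_pow, ← Real.rpow_mul_natCast hu.le, ← Real.rpow_mul_natCast hu.le, Nat.cast_sub hlk]
  rw [show a * (2 * l - k) = a * l + -a * (k - l) by ring, Real.rpow_add hu]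
  ring

lemma T2_zero_eq_sum (lam : ℝ) (hlam : lam ≠ 0) (n k : ℕ) :
    T2 lam 0 n k = (k.factorial : ℝ)⁻¹ *
      ∑ l ∈ range (k + 1), (k.choose l : ℝ) * (-1) ^ (k - l) * dfall lam (l - k / 2) n := by
  have hU : {t : ℝ | 0 < 1 + lam * t} ∈ 𝓝 0 :=
    (isOpen_lt continuous_const (by fun_prop)).mem_nhds (by simp)
  set c : ℕ → ℝ := fun l => (l - k / 2) / lam
  have hexpand : (fun t : ℝ => (k.factorial : ℝ)⁻¹ * (1 + lam * t) ^ (0 / lam) *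
        ((1 + lam * t) ^ (1 / (2 * lam)) - (1 + lam * t) ^ (-(1 / (2 * lam)))) ^ k)
      =ᶠ[𝓝 0] fun t => ∑ l ∈ range (k + 1),
        (k.factorial : ℝ)⁻¹ * ((k.choose l : ℝ) * (-1) ^ (k - l)) * (1 + lam * t) ^ c l := by
    filter_upwards [hU] with t ht
    rw [rpow_sub_rpow_neg_pow ht, zero_div, Real.rpow_zero, mul_one, mul_sum]
    refine sum_congr rfl fun l _ => ?_
    rw [show 1 / (2 * lam) * (2 * l - k) = c l by simp only [c]; field_simp]
    ring
  have hsmooth (l : ℕ) : ContDiffAt ℝ n (fun t => (1 + lam * t) ^ c l) 0 :=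
    (contDiffAt_const.add (contDiffAt_const.mul contDiffAt_id)).rpow_const_of_ne (by simp)
  rw [T2, hexpand.iteratedDeriv_eq, iteratedDeriv_fun_sum fun l _ =>
    contDiffAt_const.mul (hsmooth l), mul_sum]
  refine sum_congr rfl fun l _ => ?_
  rw [iteratedDeriv_const_mul_field, iteratedDeriv_one_add_mul_rpow lam (c l) n (by simp)]
  simp only [c, mul_div_cancel₀ _ hlam, mul_zero, add_zero, Real.one_rpow, mul_one, mul_assoc]

theorem T2_num_explicit (lam : ℝ) (hlam : lam ≠ 0) (n k : ℕ) :
    (n.factorial : ℝ) / (k.factorial : ℝ) *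
        ∑ l ∈ Finset.range (k + 1),
          (k.choose l : ℝ) * (-1) ^ (k - l) *
            (dfall lam ((l : ℝ) - (k : ℝ) / 2) n / (n.factorial : ℝ))
      = if k ≤ n then T2 lam 0 n k else 0 := by
  have hcancel : (n.factorial : ℝ) / k.factorial *
        ∑ l ∈ range (k + 1), (k.choose l : ℝ) * (-1) ^ (k - l) *
          (dfall lam (l - k / 2) n / n.factorial)
      = (k.factorial : ℝ)⁻¹ *
        ∑ l ∈ range (k + 1), (k.choose l : ℝ) * (-1) ^ (k - l) * dfall lam (l - k / 2) n := by
    rw [mul_sum, mul_sum]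
    refine sum_congr rfl fun l _ => ?_
    generalize dfall lam _ n = d
    field_simp
  rw [hcancel]
  split_ifs with hkn
  · exact (T2_zero_eq_sum lam hlam n k).symm
  · have h := sum_choose_mul_neg_one_pow_dfall_eq_zero lam (-(k / 2)) (not_le.mp hkn)
    simp only [← sub_eq_neg_add] at h
    rw [h, mul_zero]
end

section
/- For nonnegative integers n, k, the sum Σ_{l=0}^k Σ_{i=l}^n C(n,i)·S_{2,λ}(i,l)·S_{2,-λ}(n-i,k-l)·(-1)^{n-i} equals k!·C(2k,k)·T_{2,λ}(n,2k) if n ≥ 2k and 0 if n < 2k. -/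
noncomputable def S2d (lam : ℝ) (n k : ℕ) : ℝ :=
  iteratedDeriv n (fun t : ℝ =>
    (k.factorial : ℝ)⁻¹ * ((1 + lam * t) ^ (1 / lam) - 1) ^ k) 0

/-!
With `u = (1 + λt)^(1/(2λ))` the three generating functions are `u² - 1` (for `S_{2,λ}`),
`u⁻² - 1` (for `S_{2,-λ}` at `-t`) and `u - u⁻¹` (for `T_{2,λ}`), and
`(u - u⁻¹)² = (u² - 1) + (u⁻² - 1)`. Hence the binomial theorem turns the convolution
`∑ₗ (u² - 1)ˡ/l! · (u⁻² - 1)^(k-l)/(k-l)!` into `(u - u⁻¹)^(2k)/k!`. Reading off the `n`-th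
derivative at `0` with the Leibniz rule gives the identity; the sign `(-1)^(n-i)` comes from the
substitution `t ↦ -t`, and the vanishing for `n < 2k` from `u - u⁻¹ = 0` at `t = 0`.
-/

open Finset

section IteratedDeriv

variable {𝕜 : Type*} [NontriviallyNormedField 𝕜] {𝔸 : Type*} [NormedRing 𝔸] [NormedAlgebra 𝕜 𝔸]
  {f g : 𝕜 → 𝔸} {x : 𝕜} {n : ℕ}

theorem iteratedDeriv_fun_mul_eq_zero_of_lt {a b : ℕ} (hf : ContDiffAt 𝕜 n f x)
    (hg : ContDiffAt 𝕜 n g x) (ha : ∀ j < a, iteratedDeriv j f x = 0)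
    (hb : ∀ j < b, iteratedDeriv j g x = 0) (hn : n < a + b) :
    iteratedDeriv n (fun y => f y * g y) x = 0 := by
  rw [iteratedDeriv_fun_mul hf hg]
  refine sum_eq_zero fun i hi => ?_
  have hin : i ≤ n := Nat.lt_succ_iff.mp (mem_range.mp hi)
  rcases lt_or_ge i a with hia | hia
  · simp [ha i hia]
  · simp [hb (n - i) (by omega)]

theorem iteratedDeriv_fun_pow_eq_zero_of_lt {m : ℕ} (hf : ContDiffAt 𝕜 n f x) (hfx : f x = 0)
    (hn : n < m) : iteratedDeriv n (fun y => f y ^ m) x = 0 := by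
  induction m generalizing n with
  | zero => omega
  | succ m ih =>
    simp only [pow_succ']
    refine iteratedDeriv_fun_mul_eq_zero_of_lt (a := 1) (b := n) hf (hf.pow m) ?_
      (fun j hj => ih (hf.of_le (by exact_mod_cast hj.le)) (by omega)) (by omega)
    intro j hj
    simpa [Nat.lt_one_iff.mp hj] using hfx

end IteratedDeriv

theorem inv_factorial_mul_add_pow {K : Type*} [Field K] [CharZero K] (a b : K) (k : ℕ) :
    (k.factorial : K)⁻¹ * (a + b) ^ k
      = ∑ l ∈ range (k + 1),
          (l.factorial : K)⁻¹ * a ^ l * (((k - l).factorial : K)⁻¹ * b ^ (k - l)) := by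
  rw [add_pow, mul_sum]
  refine sum_congr rfl fun l hl => ?_
  rw [Nat.cast_choose K (Nat.lt_succ_iff.mp (mem_range.mp hl))]
  have : (k.factorial : K) ≠ 0 := Nat.cast_ne_zero.mpr k.factorial_ne_zero
  field_simp

theorem inv_factorial_eq_centralBinom {K : Type*} [Field K] [CharZero K] (k : ℕ) :
    (k.factorial : K)⁻¹ = k.factorial * ((2 * k).choose k : K) * ((2 * k).factorial : K)⁻¹ := by
  rw [Nat.cast_choose K (by omega : k ≤ 2 * k), show 2 * k - k = k by omega]
  have : ((2 * k).factorial : K) ≠ 0 := Nat.cast_ne_zero.mpr (2 * k).factorial_ne_zero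
  field_simp

theorem sub_inv_sq {K : Type*} [Field K] {u : K} (hu : u ≠ 0) :
    (u - u⁻¹) ^ 2 = (u ^ 2 - 1) + (u⁻¹ ^ 2 - 1) := by
  field_simp
  ring

open Filter Topology

noncomputable def stirlingGF (lam : ℝ) (k : ℕ) (t : ℝ) : ℝ :=
  (k.factorial : ℝ)⁻¹ * ((1 + lam * t) ^ (1 / lam) - 1) ^ k

noncomputable def centralGF (lam : ℝ) (k : ℕ) (t : ℝ) : ℝ :=
  (k.factorial : ℝ)⁻¹ * ((1 + lam * t) ^ (1 / (2 * lam)) - (1 + lam * t) ^ (-(1 / (2 * lam)))) ^ k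

theorem S2d_eq_iteratedDeriv (lam : ℝ) (n k : ℕ) :
    S2d lam n k = iteratedDeriv n (stirlingGF lam k) 0 := rfl

theorem T2_zero_eq_iteratedDeriv (lam : ℝ) (n k : ℕ) :
    T2 lam 0 n k = iteratedDeriv n (centralGF lam k) 0 := by
  simp only [T2, zero_div, Real.rpow_zero, mul_one]
  rfl

section Smoothness

variable {N : WithTop ℕ∞}

theorem contDiffAt_one_add_mul_rpow (lam e : ℝ) : ContDiffAt ℝ N (fun t => (1 + lam * t) ^ e) 0 :=
  ContDiffAt.rpow_const_of_ne (by fun_prop) (by simp)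

theorem contDiffAt_stirlingGF {lam : ℝ} (k : ℕ) : ContDiffAt ℝ N (stirlingGF lam k) 0 :=
  contDiffAt_const.mul (((contDiffAt_one_add_mul_rpow lam _).sub contDiffAt_const).pow k)

theorem contDiffAt_stirlingGF_comp_neg {lam : ℝ} (k : ℕ) :
    ContDiffAt ℝ N (fun t => stirlingGF lam k (-t)) 0 :=
  ContDiffAt.comp (g := stirlingGF lam k) 0 (by simpa using contDiffAt_stirlingGF k)
    contDiff_neg.contDiffAt

end Smoothness

theorem S2d_eq_zero_of_lt {lam : ℝ} {n k : ℕ} (h : n < k) : S2d lam n k = 0 := by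
  rw [S2d]
  simp only [iteratedDeriv_const_mul_field]
  rw [iteratedDeriv_fun_pow_eq_zero_of_lt
    ((contDiffAt_one_add_mul_rpow lam _).sub contDiffAt_const) (by simp) h, mul_zero]

theorem T2_zero_eq_zero_of_lt {lam : ℝ} {n k : ℕ} (h : n < k) : T2 lam 0 n k = 0 := by
  rw [T2]
  simp only [zero_div, Real.rpow_zero, mul_one, iteratedDeriv_const_mul_field]
  rw [iteratedDeriv_fun_pow_eq_zero_of_lt
    ((contDiffAt_one_add_mul_rpow lam _).sub (contDiffAt_one_add_mul_rpow lam _)) (by simp) h,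
    mul_zero]

theorem iteratedDeriv_stirlingGF_comp_neg (lam : ℝ) (m k : ℕ) :
    iteratedDeriv m (fun t => stirlingGF lam k (-t)) 0 = (-1) ^ m * S2d lam m k := by
  rw [iteratedDeriv_comp_neg, neg_zero, smul_eq_mul, S2d_eq_iteratedDeriv]

theorem sum_Icc_choose_mul_S2d_mul_S2d_neg (lam : ℝ) (n l j : ℕ) :
    ∑ i ∈ Icc l n, (n.choose i : ℝ) * S2d lam i l * S2d (-lam) (n - i) j * (-1) ^ (n - i)
      = iteratedDeriv n (fun t => stirlingGF lam l t * stirlingGF (-lam) j (-t)) 0 := by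
  rw [iteratedDeriv_fun_mul (contDiffAt_stirlingGF l) (contDiffAt_stirlingGF_comp_neg j)]
  have hsub : Icc l n ⊆ range (n + 1) := fun i hi =>
    mem_range.mpr (Nat.lt_succ_of_le (mem_Icc.mp hi).2)
  refine sum_subset_zero_on_sdiff hsub (fun i hi => ?_) (fun i _ => ?_)
  · obtain ⟨hin, hil⟩ := mem_sdiff.mp hi
    rw [mem_range] at hin; rw [mem_Icc] at hil
    rw [← S2d_eq_iteratedDeriv, S2d_eq_zero_of_lt (by omega : i < l), mul_zero, zero_mul]
  · rw [iteratedDeriv_stirlingGF_comp_neg, S2d_eq_iteratedDeriv]; ring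

theorem sum_stirlingGF_mul_stirlingGF_neg {lam t : ℝ} (ht : 0 < 1 + lam * t) (k : ℕ) :
    ∑ l ∈ range (k + 1), stirlingGF lam l t * stirlingGF (-lam) (k - l) (-t)
      = k.factorial * ((2 * k).choose k : ℝ) * centralGF lam (2 * k) t := by
  set u := (1 + lam * t) ^ (1 / (2 * lam)) with hu_def
  have hu : u ≠ 0 := (Real.rpow_pos_of_pos ht _).ne'
  have hsq : (1 + lam * t) ^ (1 / lam) = u ^ 2 := by
    rw [hu_def, ← Real.rpow_mul_natCast ht.le]; congr 1; push_cast; ring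
  have hsq_neg : (1 + -lam * -t) ^ (1 / -lam) = u⁻¹ ^ 2 := by
    rw [neg_mul_neg, hu_def, ← Real.rpow_neg ht.le, ← Real.rpow_mul_natCast ht.le]
    congr 1; push_cast; ring
  have hinv : (1 + lam * t) ^ (-(1 / (2 * lam))) = u⁻¹ := Real.rpow_neg ht.le _
  simp only [stirlingGF, centralGF, hsq, hsq_neg, hinv]
  rw [← inv_factorial_mul_add_pow, ← sub_inv_sq hu, ← pow_mul, inv_factorial_eq_centralBinom]
  ring

theorem T2_even_via_lambda_stirling_general (lam : ℝ) (n k : ℕ) :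
    ∑ l ∈ Finset.range (k + 1), ∑ i ∈ Finset.Icc l n,
        (n.choose i : ℝ) * S2d lam i l * S2d (-lam) (n - i) (k - l) * (-1) ^ (n - i)
      = if 2 * k ≤ n then (k.factorial : ℝ) * ((2 * k).choose k : ℝ) * T2 lam 0 n (2 * k)
        else 0 := by
  have hnear : ∀ᶠ t in 𝓝 (0 : ℝ), 0 < 1 + lam * t :=
    continuousAt_const.eventually_lt (by fun_prop) (by simp)
  have hgf : (fun t => ∑ l ∈ range (k + 1), stirlingGF lam l t * stirlingGF (-lam) (k - l) (-t))
      =ᶠ[𝓝 0] fun t => k.factorial * ((2 * k).choose k : ℝ) * centralGF lam (2 * k) t := by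
    filter_upwards [hnear] with t ht using sum_stirlingGF_mul_stirlingGF_neg ht k
  calc _ = ∑ l ∈ range (k + 1),
          iteratedDeriv n (fun t => stirlingGF lam l t * stirlingGF (-lam) (k - l) (-t)) 0 :=
        sum_congr rfl fun l _ => sum_Icc_choose_mul_S2d_mul_S2d_neg lam n l (k - l)
    _ = iteratedDeriv n
          (fun t => ∑ l ∈ range (k + 1), stirlingGF lam l t * stirlingGF (-lam) (k - l) (-t)) 0 :=
        (iteratedDeriv_fun_sum fun l _ =>
          (contDiffAt_stirlingGF l).mul (contDiffAt_stirlingGF_comp_neg (k - l))).symm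
    _ = k.factorial * ((2 * k).choose k : ℝ) * T2 lam 0 n (2 * k) := by
        rw [hgf.iteratedDeriv_eq, iteratedDeriv_const_mul_field, T2_zero_eq_iteratedDeriv]
    _ = _ := by
        split_ifs with h
        · rfl
        · rw [T2_zero_eq_zero_of_lt (by omega), mul_zero]

theorem T2_even_via_lambda_stirling (lam : ℝ) (hlam : lam ≠ 0) (n k : ℕ) :
    ∑ l ∈ Finset.range (k + 1), ∑ i ∈ Finset.Icc l n,
        (n.choose i : ℝ) * S2d lam i l * S2d (-lam) (n - i) (k - l) * (-1) ^ (n - i)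
      = if 2 * k ≤ n then (k.factorial : ℝ) * ((2 * k).choose k : ℝ) * T2 lam 0 n (2 * k)
        else 0 :=
  T2_even_via_lambda_stirling_general lam n k
end
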